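/- Let 2 < n < ω. There exists an atomic A ∈ RCA_n such that there is no injective CA_n-homomorphism from the complex algebra Cm At A (the Dedekind–MacNeille completion of the subalgebra generated by the atoms) into the canonical extension A⁺ of A. -/

import Mathlib

/-- Tarskian cylindric algebra operations indexed by `I` on a Boolean algebra `A`. -/
structure CylStruct (I : Type) (A : Type) [BooleanAlgebra A] where
  c : I → A → A
  d : I → I → A
  c_bot : ∀ i, c i ⊥ = ⊥
  le_c : ∀ i x, x ≤ c i x
  c_inf_c : ∀ i x y, c i (x ⊓ c i y) = c i x ⊓ c i y
  c_comm : ∀ i j x, c i (c j x) = c j (c i x)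
  d_diag : ∀ i, d i i = ⊤
  d_exch : ∀ i j k, k ≠ i → k ≠ j → d i j = c k (d i k ⊓ d k j)
  d_cell : ∀ i j x, i ≠ j → c i (d i j ⊓ x) ⊓ c i (d i j ⊓ xᶜ) = ⊥

/-- A bundled cylindric algebra with index type `I`. -/
structure CAlg (I : Type) : Type 1 where
  carrier : Type
  [ba : BooleanAlgebra carrier]
  str : CylStruct I carrier

attribute [instance] CAlg.ba

/-- The set of `n`-neat elements of an `ω`-dimensional cylindric algebra. -/
def nrSetNat (n : ℕ) {B : Type} [BooleanAlgebra B] (cB : CylStruct ℕ B) : Set B :=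
  {b | ∀ i : ℕ, n ≤ i → cB.c i b = b}

/-- The set of `n`-neat elements of an `m`-dimensional cylindric algebra. -/
def nrSetFin {m : ℕ} (n : ℕ) {B : Type} [BooleanAlgebra B] (cB : CylStruct (Fin m) B) : Set B :=
  {b | ∀ i : Fin m, n ≤ (i : ℕ) → cB.c i b = b}

/-- `f` is a homomorphism of Boolean algebras. -/
structure IsBoolHom {A B : Type} [BooleanAlgebra A] [BooleanAlgebra B] (f : A → B) : Prop where
  map_bot : f ⊥ = ⊥
  map_top : f ⊤ = ⊤
  map_sup : ∀ x y, f (x ⊔ y) = f x ⊔ f y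
  map_inf : ∀ x y, f (x ⊓ y) = f x ⊓ f y
  map_compl : ∀ x, f xᶜ = (f x)ᶜ

/-- A neat embedding of an `n`-dimensional algebra into (the `n`-neat part of) an
`ω`-dimensional one. -/
structure IsNeatEmbedNat (n : ℕ) {A B : Type} [BooleanAlgebra A] [BooleanAlgebra B]
    (cA : CylStruct (Fin n) A) (cB : CylStruct ℕ B) (f : A → B) : Prop where
  bool : IsBoolHom f
  inj : Function.Injective f
  map_c : ∀ (i : Fin n) (x : A), f (cA.c i x) = cB.c (i : ℕ) (f x)
  map_d : ∀ i j : Fin n, f (cA.d i j) = cB.d (i : ℕ) (j : ℕ)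
  range_sub : Set.range f ⊆ nrSetNat n cB

/-- A neat embedding of an `n`-dimensional algebra into (the `n`-neat part of) an
`m`-dimensional one. -/
structure IsNeatEmbedFin {m : ℕ} (n : ℕ) (h : n ≤ m) {A B : Type} [BooleanAlgebra A]
    [BooleanAlgebra B] (cA : CylStruct (Fin n) A) (cB : CylStruct (Fin m) B)
    (f : A → B) : Prop where
  bool : IsBoolHom f
  inj : Function.Injective f
  map_c : ∀ (i : Fin n) (x : A), f (cA.c i x) = cB.c (Fin.castLE h i) (f x)
  map_d : ∀ i j : Fin n, f (cA.d i j) = cB.d (Fin.castLE h i) (Fin.castLE h j)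
  range_sub : Set.range f ⊆ nrSetFin n cB

/-- `A ∈ Nr_n CA_ω`. -/
def InNrNat (n : ℕ) {A : Type} [BooleanAlgebra A] (cA : CylStruct (Fin n) A) : Prop :=
  ∃ (B : CAlg ℕ) (f : A → B.carrier),
    IsNeatEmbedNat n cA B.str f ∧ Set.range f = nrSetNat n B.str

/-- `A ∈ S Nr_n CA_ω`. -/
def InSNrNat (n : ℕ) {A : Type} [BooleanAlgebra A] (cA : CylStruct (Fin n) A) : Prop :=
  ∃ (B : CAlg ℕ) (f : A → B.carrier), IsNeatEmbedNat n cA B.str f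

/-- `A ∈ S_c Nr_n CA_ω`: `A` is a complete subalgebra of an `n`-neat reduct of a `CA_ω`. -/
def InScNrNat (n : ℕ) {A : Type} [BooleanAlgebra A] (cA : CylStruct (Fin n) A) : Prop :=
  ∃ (B : CAlg ℕ) (f : A → B.carrier), IsNeatEmbedNat n cA B.str f ∧
    ∀ S : Set A, IsLUB S ⊤ → ∀ b ∈ nrSetNat n B.str, (∀ s ∈ S, f s ≤ b) → b = ⊤

/-- `A ∈ Nr_n CA_m`. -/
def InNrFin (n m : ℕ) (h : n ≤ m) {A : Type} [BooleanAlgebra A]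
    (cA : CylStruct (Fin n) A) : Prop :=
  ∃ (B : CAlg (Fin m)) (f : A → B.carrier),
    IsNeatEmbedFin n h cA B.str f ∧ Set.range f = nrSetFin n B.str

/-- `A ∈ S Nr_n CA_m`. -/
def InSNrFin (n m : ℕ) (h : n ≤ m) {A : Type} [BooleanAlgebra A]
    (cA : CylStruct (Fin n) A) : Prop :=
  ∃ (B : CAlg (Fin m)) (f : A → B.carrier), IsNeatEmbedFin n h cA B.str f

/-- `A ∈ S_c Nr_n CA_m`. -/
def InScNrFin (n m : ℕ) (h : n ≤ m) {A : Type} [BooleanAlgebra A]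
    (cA : CylStruct (Fin n) A) : Prop :=
  ∃ (B : CAlg (Fin m)) (f : A → B.carrier), IsNeatEmbedFin n h cA B.str f ∧
    ∀ S : Set A, IsLUB S ⊤ → ∀ b ∈ nrSetFin n B.str, (∀ s ∈ S, f s ≤ b) → b = ⊤

/-- Relativized cylindrification on sets of `n`-sequences. -/
def cylOp {n : ℕ} {U : Type} (V : Set (Fin n → U)) (i : Fin n) (X : Set (Fin n → U)) :
    Set (Fin n → U) :=
  {s ∈ V | ∃ t ∈ X, ∀ j, j ≠ i → t j = s j}

/-- Relativized diagonal element. -/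
def diagSet {n : ℕ} {U : Type} (V : Set (Fin n → U)) (i j : Fin n) : Set (Fin n → U) :=
  {s ∈ V | s i = s j}

/-- `V` is a generalized cylindric space unit: a disjoint union of cartesian squares. -/
def IsGsUnit {n : ℕ} {U : Type} (V : Set (Fin n → U)) : Prop :=
  ∃ 𝒦 : Set (Set U), (∀ W ∈ 𝒦, W.Nonempty) ∧
    (∀ W ∈ 𝒦, ∀ W' ∈ 𝒦, W ≠ W' → Disjoint W W') ∧
    V = ⋃ W ∈ 𝒦, {s | ∀ i, s i ∈ W}

/-- `f` represents the cylindric algebra `cA` as a set algebra with top element `V`. -/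
structure IsRepOn {n : ℕ} {A : Type} [BooleanAlgebra A] (cA : CylStruct (Fin n) A)
    {U : Type} (V : Set (Fin n → U)) (f : A → Set (Fin n → U)) : Prop where
  inj : Function.Injective f
  map_top : f ⊤ = V
  map_bot : f ⊥ = ∅
  map_sup : ∀ x y, f (x ⊔ y) = f x ∪ f y
  map_compl : ∀ x, f xᶜ = V \ f x
  map_c : ∀ i x, f (cA.c i x) = cylOp V i (f x)
  map_d : ∀ i j, f (cA.d i j) = diagSet V i j

/-- `A ∈ RCA_n` : `A` is representable as a generalized cylindric set algebra. -/
def Representable (n : ℕ) {A : Type} [BooleanAlgebra A] (cA : CylStruct (Fin n) A) : Prop :=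
  ∃ (U : Type) (V : Set (Fin n → U)) (f : A → Set (Fin n → U)),
    IsGsUnit V ∧ IsRepOn cA V f

/-- `A ∈ CRCA_n` : completely representable. -/
def CompletelyRepresentable (n : ℕ) {A : Type} [BooleanAlgebra A]
    (cA : CylStruct (Fin n) A) : Prop :=
  ∃ (U : Type) (V : Set (Fin n → U)) (f : A → Set (Fin n → U)),
    IsGsUnit V ∧ IsRepOn cA V f ∧
    ∀ (S : Set A) (a : A), IsLUB S a → f a = ⋃ s ∈ S, f s

/-- Cylindrification of the complex algebra over the atom structure of `A`. -/
def cmC {n : ℕ} {A : Type} [BooleanAlgebra A] (cA : CylStruct (Fin n) A) (i : Fin n)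
    (S : Set {a : A // IsAtom a}) : Set {a : A // IsAtom a} :=
  {a | ∃ b ∈ S, a.1 ≤ cA.c i b.1}

/-- Diagonal elements of the complex algebra over the atom structure of `A`. -/
def cmD {n : ℕ} {A : Type} [BooleanAlgebra A] (cA : CylStruct (Fin n) A) (i j : Fin n) :
    Set {a : A // IsAtom a} :=
  {a | a.1 ≤ cA.d i j}

/-- `cCm` is the complex algebra `Cm At A` of the atomic algebra `A`. -/
def IsComplexAlgebraOf {n : ℕ} {A : Type} [BooleanAlgebra A] (cA : CylStruct (Fin n) A)
    (cCm : CylStruct (Fin n) (Set {a : A // IsAtom a})) : Prop :=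
  (∀ i S, cCm.c i S = cmC cA i S) ∧ (∀ i j, cCm.d i j = cmD cA i j)

/-- A cylindric algebra is simple if its only ideals are `{⊥}` and the whole algebra. -/
def IsSimple {n : ℕ} {A : Type} [BooleanAlgebra A] (cA : CylStruct (Fin n) A) : Prop :=
  ∀ I : Set A, ⊥ ∈ I → (∀ x ∈ I, ∀ y ∈ I, x ⊔ y ∈ I) → (∀ x ∈ I, ∀ y, y ≤ x → y ∈ I) →
    (∀ x ∈ I, ∀ i, cA.c i x ∈ I) → I = {⊥} ∨ I = Set.univ

/-- An ultrafilter of a Boolean algebra. -/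
def IsBoolUltrafilter {A : Type} [BooleanAlgebra A] (F : Set A) : Prop :=
  ⊤ ∈ F ∧ ⊥ ∉ F ∧ (∀ x ∈ F, ∀ y ∈ F, x ⊓ y ∈ F) ∧
    (∀ x ∈ F, ∀ y, x ≤ y → y ∈ F) ∧ (∀ x : A, x ∈ F ∨ xᶜ ∈ F)
/-- A homomorphism of cylindric algebras of the same dimension. -/
structure IsCylHom {I : Type} {A B : Type} [BooleanAlgebra A] [BooleanAlgebra B]
    (cA : CylStruct I A) (cB : CylStruct I B) (f : A → B) : Prop where
  bool : IsBoolHom f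
  map_c : ∀ i x, f (cA.c i x) = cB.c i (f x)
  map_d : ∀ i j, f (cA.d i j) = cB.d i j

/-- Cylindrifications of the canonical extension of `A`: the complex algebra over the
ultrafilter frame of `A`. -/
def canC {n : ℕ} {A : Type} [BooleanAlgebra A] (cA : CylStruct (Fin n) A) (i : Fin n)
    (S : Set {F : Set A // IsBoolUltrafilter F}) : Set {F : Set A // IsBoolUltrafilter F} :=
  {F | ∃ G ∈ S, ∀ g ∈ G.1, cA.c i g ∈ F.1}

/-- Diagonal elements of the canonical extension of `A`. -/
def canD {n : ℕ} {A : Type} [BooleanAlgebra A] (cA : CylStruct (Fin n) A) (i j : Fin n) :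
    Set {F : Set A // IsBoolUltrafilter F} :=
  {F | cA.d i j ∈ F.1}

/-- `cP` is the canonical extension `A⁺` of `A`. -/
def IsCanonicalExtOf {n : ℕ} {A : Type} [BooleanAlgebra A] (cA : CylStruct (Fin n) A)
    (cP : CylStruct (Fin n) (Set {F : Set A // IsBoolUltrafilter F})) : Prop :=
  (∀ i S, cP.c i S = canC cA i S) ∧ (∀ i j, cP.d i j = canD cA i j)

/-!
Take for `A` the algebra of sets of points of `ℕ × (Fin n → α)` (a disjoint union of finite
squares) that are finite or cofinite inside each region of points with a fixed equality pattern;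
`α` has room for fresh values, which keeps `A` closed under cylindrification. The atoms of `A`
are the singletons, and a slim ultrafilter of `A` (one containing no finite set) is determined by
the region it contains. In `Cm At A` the sets `{x i = a}`, `a : α`, are pairwise disjoint with
full `i`-cylindrification. Under a homomorphism into `A⁺`, the cofinite ultrafilter of an infinite
region therefore sees along `i` a member of the image of each of them; these ultrafilters are slim,
as the `i`-cylindrification of a finite set is finite, and pairwise distinct, so there would be at
least as many regions as values `a`.
-/

namespace CylStruct

variable {I A : Type} [BooleanAlgebra A] (cA : CylStruct I A) {i : I} {x y z : A}

theorem c_mono (h : x ≤ y) : cA.c i x ≤ cA.c i y := by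
  have : x ⊓ cA.c i y = x := inf_eq_left.mpr (h.trans (cA.le_c i y))
  calc cA.c i x = cA.c i x ⊓ cA.c i y := by rw [← cA.c_inf_c, this]
    _ ≤ cA.c i y := inf_le_right

theorem c_idem (i : I) (x : A) : cA.c i (cA.c i x) = cA.c i x := by
  refine le_antisymm ?_ (cA.le_c i _)
  have h := cA.c_inf_c i (cA.c i x) x
  rw [inf_idem] at h
  exact h ▸ inf_le_right

theorem le_c_trans (hxy : x ≤ cA.c i y) (hyz : y ≤ cA.c i z) : x ≤ cA.c i z :=
  hxy.trans ((cA.c_mono hyz).trans_eq (cA.c_idem i z))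

theorem disjoint_c_of_disjoint_c (h : Disjoint x (cA.c i y)) : Disjoint (cA.c i x) y := by
  have h' : cA.c i x ⊓ cA.c i y = ⊥ := by
    rw [← cA.c_inf_c, h.eq_bot, cA.c_bot]
  exact disjoint_iff.mpr (le_bot_iff.mp (h' ▸ inf_le_inf_left _ (cA.le_c i y)))

/-- Cylindrifications are self-conjugate. -/
theorem disjoint_c_comm : Disjoint x (cA.c i y) ↔ Disjoint (cA.c i x) y :=
  ⟨cA.disjoint_c_of_disjoint_c, fun h => (cA.disjoint_c_of_disjoint_c h.symm).symm⟩

theorem c_compl_c (i : I) (x : A) : cA.c i (cA.c i x)ᶜ = (cA.c i x)ᶜ := by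
  refine le_antisymm ?_ (cA.le_c i _)
  rw [le_compl_iff_disjoint_right, ← disjoint_c_comm, c_idem]
  exact disjoint_compl_left

theorem c_sup (i : I) (x y : A) : cA.c i (x ⊔ y) = cA.c i x ⊔ cA.c i y := by
  refine le_antisymm ?_ (sup_le (cA.c_mono le_sup_left) (cA.c_mono le_sup_right))
  rw [← compl_compl (cA.c i x ⊔ cA.c i y), le_compl_iff_disjoint_right, ← disjoint_c_comm,
    disjoint_sup_left, disjoint_c_comm, disjoint_c_comm]
  exact ⟨disjoint_compl_right.mono_right (compl_le_compl le_sup_left),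
    disjoint_compl_right.mono_right (compl_le_compl le_sup_right)⟩

theorem atom_le_c_comm {a b : A} (ha : IsAtom a) (hb : IsAtom b) :
    a ≤ cA.c i b ↔ b ≤ cA.c i a := by
  rw [← ha.not_disjoint_iff_le, ← hb.not_disjoint_iff_le, cA.disjoint_c_comm, disjoint_comm]

theorem exists_atom_of_le_c [IsAtomic A] {a : A} (ha : IsAtom a)
    (h : a ≤ cA.c i x) : ∃ b, IsAtom b ∧ b ≤ x ∧ a ≤ cA.c i b := by
  rw [← ha.not_disjoint_iff_le, cA.disjoint_c_comm, disjoint_iff] at h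
  obtain ⟨b, hb, hbx⟩ := (eq_bot_or_exists_atom_le _).resolve_left h
  exact ⟨b, hb, hbx.trans inf_le_right, (cA.atom_le_c_comm ha hb).mpr (hbx.trans inf_le_left)⟩

end CylStruct

namespace IsBoolUltrafilter

variable {A : Type} [BooleanAlgebra A] {F G : Set A} {x y : A}

theorem top_mem (hF : IsBoolUltrafilter F) : ⊤ ∈ F := hF.1

theorem bot_notMem (hF : IsBoolUltrafilter F) : ⊥ ∉ F := hF.2.1

theorem inf_mem (hF : IsBoolUltrafilter F) (hx : x ∈ F) (hy : y ∈ F) : x ⊓ y ∈ F :=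
  hF.2.2.1 x hx y hy

theorem mem_of_le (hF : IsBoolUltrafilter F) (hx : x ∈ F) (hxy : x ≤ y) : y ∈ F :=
  hF.2.2.2.1 x hx y hxy

theorem compl_mem_iff (hF : IsBoolUltrafilter F) : xᶜ ∈ F ↔ x ∉ F := by
  refine ⟨fun hc hx => hF.bot_notMem ?_, fun hx => (hF.2.2.2.2 x).resolve_left hx⟩
  simpa using hF.inf_mem hx hc

theorem mem_or_mem (hF : IsBoolUltrafilter F) (h : x ⊔ y ∈ F) : x ∈ F ∨ y ∈ F := by
  refine or_iff_not_imp_left.mpr fun hx => hF.mem_of_le (hF.inf_mem h (hF.compl_mem_iff.mpr hx)) ?_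
  simp [inf_sup_right]

theorem exists_mem_of_finset_sup_mem (hF : IsBoolUltrafilter F) {ι : Type} (s : Finset ι)
    {f : ι → A} (h : s.sup f ∈ F) :
    ∃ i ∈ s, f i ∈ F := by
  induction s using Finset.cons_induction with
  | empty => exact absurd h hF.bot_notMem
  | cons a s _ ih =>
    rw [Finset.sup_cons] at h
    rcases hF.mem_or_mem h with ha | hs
    · exact ⟨a, Finset.mem_cons_self a s, ha⟩
    · obtain ⟨i, hi, hfi⟩ := ih hs
      exact ⟨i, Finset.mem_cons_of_mem hi, hfi⟩

theorem eq_of_subset (hF : IsBoolUltrafilter F) (hG : IsBoolUltrafilter G) (h : F ⊆ G) : F = G := by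
  refine h.antisymm fun x hx => ?_
  by_contra hxF
  exact hG.compl_mem_iff.mp (h (hF.compl_mem_iff.mpr hxF)) hx

end IsBoolUltrafilter

theorem isBoolUltrafilter_compl_of_isPrime {A : Type} [BooleanAlgebra A] {J : Order.Ideal A}
    (hJ : J.IsPrime) : IsBoolUltrafilter (J : Set A)ᶜ := by
  refine ⟨hJ.top_notMem, fun h => h J.bot_mem, fun x hx y hy hxy => ?_,
    fun x hx y hxy hy => hx (J.lower hxy hy), fun x => ?_⟩
  · exact (hJ.mem_or_mem hxy).elim hx hy
  · by_contra! h
    exact hJ.top_notMem (by simpa using J.sup_mem (not_not.mp h.1) (not_not.mp h.2))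

theorem exists_isBoolUltrafilter_of_disjoint {A : Type} [BooleanAlgebra A] {D : Order.PFilter A}
    {J : Order.Ideal A} (h : Disjoint (D : Set A) J) :
    ∃ G, IsBoolUltrafilter G ∧ (D : Set A) ⊆ G ∧ Disjoint G J := by
  obtain ⟨J', hJ', hJJ', hDJ'⟩ := DistribLattice.prime_ideal_of_disjoint_filter_ideal h
  exact ⟨_, isBoolUltrafilter_compl_of_isPrime hJ', hDJ'.subset_compl_right,
    disjoint_compl_left.mono_right hJJ'⟩

section CanonicalExtension

variable {I A : Type} [BooleanAlgebra A] (cA : CylStruct I A)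

/-- The accessibility relation of `c i` in the ultrafilter frame of `A`. -/
def CanRel (i : I) (F G : Set A) : Prop := ∀ g ∈ G, cA.c i g ∈ F

variable {cA} {i : I} {F G H : Set A}

theorem canRel_refl (hF : IsBoolUltrafilter F) : CanRel cA i F F :=
  fun g hg => hF.mem_of_le hg (cA.le_c i g)

theorem CanRel.symm (hF : IsBoolUltrafilter F) (hG : IsBoolUltrafilter G) (h : CanRel cA i F G) :
    CanRel cA i G F := by
  intro f hf
  by_contra hc
  have := h _ (hG.compl_mem_iff.mpr hc)
  rw [cA.c_compl_c] at this
  exact hF.compl_mem_iff.mp this (hF.mem_of_le hf (cA.le_c i f))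

theorem CanRel.trans (hFG : CanRel cA i F G) (hGH : CanRel cA i G H) : CanRel cA i F H :=
  fun h hh => cA.c_idem i h ▸ hFG _ (hGH h hh)

def cNotMemIdeal (hF : IsBoolUltrafilter F) (i : I) : Order.Ideal A :=
  Order.IsIdeal.toIdeal (I := {y | cA.c i y ∉ F})
    { IsLowerSet := fun _ _ hxy hy hx => hy (hF.mem_of_le hx (cA.c_mono hxy))
      Nonempty := ⟨⊥, by simpa [cA.c_bot] using hF.bot_notMem⟩
      Directed := fun x hx y hy => ⟨x ⊔ y, fun h => by
        rcases hF.mem_or_mem (cA.c_sup i x y ▸ h) with h | h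
        exacts [hx h, hy h], le_sup_left, le_sup_right⟩ }

/-- Jónsson–Tarski existence lemma for the canonical extension. -/
theorem exists_canRel_of_pfilter (hF : IsBoolUltrafilter F) (D : Order.PFilter A)
    (hD : ∀ d ∈ D, cA.c i d ∈ F) :
    ∃ G, IsBoolUltrafilter G ∧ (D : Set A) ⊆ G ∧ CanRel cA i F G := by
  obtain ⟨G, hG, hDG, hGJ⟩ := exists_isBoolUltrafilter_of_disjoint
    (J := cNotMemIdeal hF i) (Set.disjoint_left.mpr fun d hd hJ => hJ (hD d hd))
  exact ⟨G, hG, hDG, fun g hg => not_not.mp (Set.disjoint_left.mp hGJ hg)⟩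

def cImagePFilter (hH : IsBoolUltrafilter H) (i : I) : Order.PFilter A :=
  Order.IsPFilter.toPFilter (F := {y | ∃ h ∈ H, cA.c i h ≤ y}) <| .of_def
    ⟨⊤, ⊤, hH.top_mem, le_top⟩
    (fun _ ⟨a, ha, hax⟩ _ ⟨b, hb, hby⟩ => ⟨cA.c i (a ⊓ b), ⟨a ⊓ b, hH.inf_mem ha hb, le_rfl⟩,
      (cA.c_mono inf_le_left).trans hax, (cA.c_mono inf_le_right).trans hby⟩)
    fun hxy ⟨h, hh, hx⟩ => ⟨h, hh, hx.trans hxy⟩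

theorem CanRel.exists_swap {j : I} (hF : IsBoolUltrafilter F) (hH : IsBoolUltrafilter H)
    (hFG : CanRel cA i F G) (hGH : CanRel cA j G H) :
    ∃ G', IsBoolUltrafilter G' ∧ CanRel cA j F G' ∧ CanRel cA i G' H := by
  obtain ⟨G', hG', hDG', hFG'⟩ := exists_canRel_of_pfilter (i := j) hF (cImagePFilter hH i) <| by
    rintro d ⟨h, hh, hd⟩
    exact hF.mem_of_le (cA.c_comm i j h ▸ hFG _ (hGH h hh)) (cA.c_mono hd)
  exact ⟨G', hG', hFG', fun h hh => hDG' ⟨h, hh, le_rfl⟩⟩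

theorem CanRel.eq_of_d_mem {j : I} (hij : i ≠ j) (hF : IsBoolUltrafilter F)
    (hG : IsBoolUltrafilter G) (hG' : IsBoolUltrafilter H) (hFG : CanRel cA i F G)
    (hFH : CanRel cA i F H) (hdG : cA.d i j ∈ G) (hdH : cA.d i j ∈ H) : G = H := by
  refine hG.eq_of_subset hG' fun g hg => ?_
  by_contra hgH
  have := hF.inf_mem (hFG _ (hG.inf_mem hdG hg))
    (hFH _ (hG'.inf_mem hdH (hG'.compl_mem_iff.mpr hgH)))
  rw [cA.d_cell i j g hij] at this
  exact hF.bot_notMem this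

end CanonicalExtension

section CanonicalExtensionFin

variable {n : ℕ} {A : Type} [BooleanAlgebra A] (cA : CylStruct (Fin n) A)

def canStr : CylStruct (Fin n) (Set {F : Set A // IsBoolUltrafilter F}) where
  c := canC cA
  d := canD cA
  c_bot i := by simp [canC]
  le_c i _ F hF := ⟨F, hF, canRel_refl F.2⟩
  c_inf_c i X Y := by
    ext F
    constructor
    · rintro ⟨G, ⟨hGX, H, hHY, hGH⟩, hFG⟩
      exact ⟨⟨G, hGX, hFG⟩, H, hHY, CanRel.trans hFG hGH⟩
    · rintro ⟨⟨G, hGX, hFG⟩, H, hHY, hFH⟩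
      exact ⟨G, ⟨hGX, H, hHY, (CanRel.symm F.2 G.2 hFG).trans hFH⟩, hFG⟩
  c_comm i j X := by
    suffices ∀ i j, canC cA i (canC cA j X) ⊆ canC cA j (canC cA i X) from
      (this i j).antisymm (this j i)
    rintro i j F ⟨G, ⟨H, hHX, hGH⟩, hFG⟩
    obtain ⟨G', hG', hFG', hG'H⟩ := CanRel.exists_swap F.2 H.2 hFG hGH
    exact ⟨⟨G', hG'⟩, ⟨H, hHX, hG'H⟩, hFG'⟩
  d_diag i := by
    ext F
    simpa [canD, cA.d_diag] using F.2.top_mem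
  d_exch i j k hki hkj := by
    ext F
    constructor
    · intro (hF : cA.d i j ∈ F.1)
      rw [cA.d_exch i j k hki hkj] at hF
      obtain ⟨G, hG, hDG, hFG⟩ := exists_canRel_of_pfilter F.2
        (Order.PFilter.principal (cA.d i k ⊓ cA.d k j)) fun d hd => F.2.mem_of_le hF (cA.c_mono hd)
      exact ⟨⟨G, hG⟩, ⟨hDG inf_le_left, hDG inf_le_right⟩, hFG⟩
    · rintro ⟨G, ⟨hdik, hdkj⟩, hFG⟩
      show cA.d i j ∈ F.1
      exact (cA.d_exch i j k hki hkj).symm ▸ hFG _ (G.2.inf_mem hdik hdkj)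
  d_cell i j X hij := by
    ext F
    simp only [Set.inf_eq_inter, Set.mem_inter_iff, Set.bot_eq_empty, Set.mem_empty_iff_false,
      iff_false]
    rintro ⟨⟨G, ⟨hdG, hGX⟩, hFG⟩, H, ⟨hdH, hHX⟩, hFH⟩
    exact hHX (Subtype.ext (CanRel.eq_of_d_mem hij F.2 G.2 H.2 hFG hFH hdG hdH) ▸ hGX)

end CanonicalExtensionFin

section ComplexAlgebra

variable {n : ℕ} {A : Type} [BooleanAlgebra A] (cA : CylStruct (Fin n) A)

def cmStr [IsAtomic A] : CylStruct (Fin n) (Set {a : A // IsAtom a}) where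
  c := cmC cA
  d := cmD cA
  c_bot i := by simp [cmC]
  le_c i _ a ha := ⟨a, ha, cA.le_c i a.1⟩
  c_inf_c i X Y := by
    ext a
    constructor
    · rintro ⟨b, ⟨hbX, d, hdY, hbd⟩, hab⟩
      exact ⟨⟨b, hbX, hab⟩, d, hdY, cA.le_c_trans hab hbd⟩
    · rintro ⟨⟨b, hbX, hab⟩, d, hdY, had⟩
      exact ⟨b, ⟨hbX, d, hdY, cA.le_c_trans ((cA.atom_le_c_comm a.2 b.2).mp hab) had⟩, hab⟩
  c_comm i j X := by
    suffices ∀ i j, cmC cA i (cmC cA j X) ⊆ cmC cA j (cmC cA i X) from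
      (this i j).antisymm (this j i)
    rintro i j a ⟨b, ⟨d, hdX, hbd⟩, hab⟩
    have : a.1 ≤ cA.c j (cA.c i d.1) := cA.c_comm i j d.1 ▸ hab.trans (cA.c_mono hbd)
    obtain ⟨b', hb', hb'd, hab'⟩ := cA.exists_atom_of_le_c a.2 this
    exact ⟨⟨b', hb'⟩, ⟨d, hdX, hb'd⟩, hab'⟩
  d_diag i := by
    ext a
    simp [cmD, cA.d_diag]
  d_exch i j k hki hkj := by
    ext a
    constructor
    · intro (ha : a.1 ≤ cA.d i j)
      rw [cA.d_exch i j k hki hkj] at ha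
      obtain ⟨b, hb, hbd, hab⟩ := cA.exists_atom_of_le_c a.2 ha
      exact ⟨⟨b, hb⟩, ⟨hbd.trans inf_le_left, hbd.trans inf_le_right⟩, hab⟩
    · rintro ⟨b, ⟨hbik, hbkj⟩, hab⟩
      show a.1 ≤ cA.d i j
      rw [cA.d_exch i j k hki hkj]
      exact hab.trans (cA.c_mono (le_inf hbik hbkj))
  d_cell i j X hij := by
    ext a
    simp only [Set.inf_eq_inter, Set.mem_inter_iff, Set.bot_eq_empty, Set.mem_empty_iff_false,
      iff_false]
    rintro ⟨⟨b, ⟨hbd, hbX⟩, hab⟩, b', ⟨hb'd, hb'X⟩, hab'⟩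
    have hb'b : b'.1 ≤ b.1ᶜ :=
      (b'.2.disjoint_of_ne b.2 fun h => hb'X (Subtype.ext h ▸ hbX)).le_compl_right
    refine a.2.1 (le_bot_iff.mp ?_)
    rw [← cA.d_cell i j b.1 hij]
    exact le_inf (hab.trans (cA.c_mono (le_inf hbd le_rfl)))
      (hab'.trans (cA.c_mono (le_inf hb'd hb'b)))

end ComplexAlgebra

section SetAlgebra

open Function

def CylStruct.restrict {I B : Type} [BooleanAlgebra B] (cB : CylStruct I B)
    (L : BooleanSubalgebra B) (hc : ∀ i {x}, x ∈ L → cB.c i x ∈ L) (hd : ∀ i j, cB.d i j ∈ L) :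
    CylStruct I L where
  c i x := ⟨cB.c i x, hc i x.2⟩
  d i j := ⟨cB.d i j, hd i j⟩
  c_bot i := Subtype.ext (cB.c_bot i)
  le_c i x := cB.le_c i x
  c_inf_c i x y := Subtype.ext (cB.c_inf_c i x y)
  c_comm i j x := Subtype.ext (cB.c_comm i j x)
  d_diag i := Subtype.ext (cB.d_diag i)
  d_exch i j k hki hkj := Subtype.ext (cB.d_exch i j k hki hkj)
  d_cell i j x hij := Subtype.ext (cB.d_cell i j x hij)

theorem IsRepOn.restrict {n : ℕ} {B U : Type} [BooleanAlgebra B] {cB : CylStruct (Fin n) B}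
    {V : Set (Fin n → U)} {f : B → Set (Fin n → U)} (hf : IsRepOn cB V f)
    (L : BooleanSubalgebra B) (hc : ∀ i {x}, x ∈ L → cB.c i x ∈ L) (hd : ∀ i j, cB.d i j ∈ L) :
    IsRepOn (cB.restrict L hc hd) V (f ∘ (↑)) where
  inj := hf.inj.comp Subtype.val_injective
  map_top := hf.map_top
  map_bot := hf.map_bot
  map_sup x y := hf.map_sup x y
  map_compl x := hf.map_compl x
  map_c i x := hf.map_c i x
  map_d i j := hf.map_d i j

variable (ι α : Type)

/-- A point `k ↦ (m, x k)` of the disjoint union of the squares `I → {m} × α`, `m : ι`, is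
encoded as the pair `(m, x)`. -/
def setCylStr (I : Type) [DecidableEq I] : CylStruct I (Set (ι × (I → α))) where
  c i X := {p | ∃ v, (p.1, update p.2 i v) ∈ X}
  d i j := {p | p.2 i = p.2 j}
  c_bot i := by simp
  le_c i X p hp := ⟨p.2 i, by simpa using hp⟩
  c_inf_c i X Y := by
    ext p
    simp only [Set.inf_eq_inter, Set.mem_ofPred_eq, Set.mem_inter_iff, update_idem]
    exact ⟨fun ⟨v, hv, w, hw⟩ => ⟨⟨v, hv⟩, w, hw⟩, fun ⟨⟨v, hv⟩, w, hw⟩ => ⟨v, hv, w, hw⟩⟩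
  c_comm i j X := by
    ext p
    by_cases hij : i = j
    · subst hij; rfl
    · simp only [Set.mem_ofPred_eq, update_comm hij]
      exact exists_comm
  d_diag i := by ext; simp
  d_exch i j k hki hkj := by
    ext p
    simp [hki.symm, hkj.symm, eq_comm]
  d_cell i j X hij := by
    ext p
    simp only [Set.mem_inter_iff, Set.mem_ofPred_eq, update_self, update_of_ne (Ne.symm hij),
      Set.inf_eq_inter, Set.bot_eq_empty, Set.mem_empty_iff_false, iff_false]
    rintro ⟨⟨v, rfl, hX⟩, ⟨w, rfl, hXc⟩⟩
    exact hXc hX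

variable {ι α} {n : ℕ}

theorem setCylStr_c_finite {I : Type} [DecidableEq I] [Finite α] {i : I}
    {X : Set (ι × (I → α))} (hX : X.Finite) : ((setCylStr ι α I).c i X).Finite := by
  refine ((hX.prod Set.finite_univ).image fun q => (q.1.1, update q.1.2 i q.2)).subset ?_
  rintro p ⟨v, hv⟩
  exact ⟨((p.1, update p.2 i v), p.2 i), ⟨hv, trivial⟩, by simp⟩

def squareEmbed (p : ι × (Fin n → α)) : Fin n → ι × α := fun k => (p.1, p.2 k)

theorem isGsUnit_range_squareEmbed [Nonempty α] :
    IsGsUnit (Set.range (squareEmbed : ι × (Fin n → α) → Fin n → ι × α)) := by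
  refine ⟨Set.range fun m : ι => Prod.fst ⁻¹' {m}, ?_, ?_, ?_⟩
  · rintro _ ⟨m, rfl⟩
    exact ⟨(m, Classical.arbitrary α), rfl⟩
  · rintro _ ⟨m, rfl⟩ _ ⟨m', rfl⟩ hne
    exact (Set.disjoint_singleton.mpr fun h => hne (by rw [h])).preimage Prod.fst
  · ext s
    simp only [Set.mem_range, Set.mem_iUnion, Set.mem_ofPred_eq, Set.mem_preimage,
      Set.mem_singleton_iff, exists_prop, exists_exists_eq_and]
    constructor
    · rintro ⟨p, rfl⟩
      exact ⟨p.1, fun _ => rfl⟩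
    · rintro ⟨m, hm⟩
      exact ⟨(m, fun k => (s k).2), funext fun k => Prod.ext (hm k).symm rfl⟩

theorem isRepOn_setCylStr (hn : 1 < n) :
    IsRepOn (setCylStr ι α (Fin n)) (Set.range squareEmbed) (Set.image squareEmbed) := by
  have hinj : Injective (squareEmbed : ι × (Fin n → α) → Fin n → ι × α) := by
    intro p q h
    have h' k := congrFun h k
    simp only [squareEmbed, Prod.mk.injEq] at h'
    exact Prod.ext (h' ⟨0, by omega⟩).1 (funext fun k => (h' k).2)
  refine ⟨hinj.image_injective, Set.image_univ, Set.image_empty _, Set.image_union _,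
    fun X => Set.image_compl_eq_range_sdiff_image hinj X, fun i X => ?_, fun i j => ?_⟩
  · ext s
    constructor
    · rintro ⟨p, ⟨v, hv⟩, rfl⟩
      refine ⟨⟨p, rfl⟩, _, ⟨_, hv, rfl⟩, fun k hk => ?_⟩
      simp [squareEmbed, update_of_ne hk]
    · rintro ⟨⟨p, rfl⟩, _, ⟨q, hq, rfl⟩, h⟩
      have : Nontrivial (Fin n) := Fin.nontrivial_iff_two_le.mpr hn
      obtain ⟨j, hj⟩ := exists_ne i
      have hq' : (p.1, update p.2 i (q.2 i)) = q := by
        refine Prod.ext (Prod.ext_iff.mp (h j hj)).1.symm (funext fun k => ?_)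
        by_cases hk : k = i
        · simp [hk]
        · simpa [update_of_ne hk, squareEmbed] using (Prod.ext_iff.mp (h k hk)).2.symm
      exact ⟨p, ⟨q.2 i, by rwa [hq']⟩, rfl⟩
  · ext s
    constructor
    · rintro ⟨p, hp, rfl⟩
      exact ⟨⟨p, rfl⟩, congrArg (p.1, ·) hp⟩
    · rintro ⟨⟨p, rfl⟩, h⟩
      exact ⟨p, (Prod.ext_iff.mp h).2, rfl⟩

end SetAlgebra

instance {β : Type} [Finite β] : Finite (Setoid β) :=
  Finite.of_injective (fun s : Setoid β => (s : β → β → Prop)) fun s t h =>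
    Setoid.ext fun a b => by rw [show (s : β → β → Prop) = t from h]

def finCofinOn {P : Type} (R : Set P) : BooleanSubalgebra (Set P) where
  carrier := {X | (X ∩ R).Finite ∨ (R \ X).Finite}
  supClosed' X hX Y hY := by
    rcases hX with hX | hX
    · rcases hY with hY | hY
      · exact Or.inl (by simpa [Set.union_inter_distrib_right] using hX.union hY)
      · exact Or.inr (hY.subset (Set.sdiff_subset_sdiff_right Set.subset_union_right))
    · exact Or.inr (hX.subset (Set.sdiff_subset_sdiff_right Set.subset_union_left))
  infClosed' X hX Y hY := by
    rcases hX with hX | hX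
    · exact Or.inl (hX.subset (Set.inter_subset_inter_left _ Set.inter_subset_left))
    rcases hY with hY | hY
    · exact Or.inl (hY.subset (Set.inter_subset_inter_left _ Set.inter_subset_right))
    · exact Or.inr (by simpa [Set.sdiff_inter] using hX.union hY)
  compl_mem' {X} hX := by
    simpa [Set.sdiff_eq, Set.inter_comm, or_comm] using hX
  bot_mem' := Or.inl (by simp)

section KernelAlgebra

open Function

variable {ι α : Type} {n : ℕ}

def region (κ : Setoid (Fin n)) : Set (ι × (Fin n → α)) := {p | Setoid.ker p.2 = κ}

variable (ι α n) in
def kernelAlgebra : BooleanSubalgebra (Set (ι × (Fin n → α))) :=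
  ⨅ κ, finCofinOn (region κ)

theorem mem_kernelAlgebra {X : Set (ι × (Fin n → α))} :
    X ∈ kernelAlgebra ι α n ↔ ∀ κ, (X ∩ region κ).Finite ∨ (region κ \ X).Finite :=
  BooleanSubalgebra.mem_iInf

theorem mem_kernelAlgebra_of_finite {X : Set (ι × (Fin n → α))} (hX : X.Finite) :
    X ∈ kernelAlgebra ι α n :=
  mem_kernelAlgebra.mpr fun _ => Or.inl (hX.subset Set.inter_subset_left)

theorem mem_kernelAlgebra_of_ker_eq {X : Set (ι × (Fin n → α))}
    (hX : ∀ p q, Setoid.ker p.2 = Setoid.ker q.2 → p ∈ X → q ∈ X) : X ∈ kernelAlgebra ι α n := by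
  refine mem_kernelAlgebra.mpr fun κ => ?_
  by_cases h : ∃ p ∈ X, p ∈ region κ
  · obtain ⟨p, hpX, hp⟩ := h
    refine Or.inr (Set.finite_empty.subset fun q ⟨hq, hqX⟩ => hqX (hX p q ?_ hpX))
    exact hp.trans hq.symm
  · push Not at h
    exact Or.inl (Set.finite_empty.subset fun q ⟨hqX, hq⟩ => h q hqX hq)

theorem region_mem_kernelAlgebra (κ : Setoid (Fin n)) : region κ ∈ kernelAlgebra ι α n :=
  mem_kernelAlgebra_of_ker_eq fun _ _ hpq hp => hpq.symm.trans hp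

theorem exists_eq_iff_eq_of_ker_eq (hα : n < Nat.card α) {x y : Fin n → α}
    (hxy : Setoid.ker x = Setoid.ker y) (v : α) : ∃ w, ∀ j, y j = w ↔ x j = v := by
  by_cases hv : ∃ l, x l = v
  · obtain ⟨l, rfl⟩ := hv
    exact ⟨y l, fun j => by simpa [Setoid.ker_def] using (Setoid.ext_iff.mp hxy j l).symm⟩
  · have : ¬ Surjective y := fun hy =>
      (Nat.card_le_card_of_surjective y hy).not_gt (by simpa using hα)
    obtain ⟨w, hw⟩ := not_forall.mp this
    push Not at hv hw
    exact ⟨w, fun j => iff_of_false (hw j) (hv j)⟩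

theorem exists_ker_update_eq (hα : n < Nat.card α) {x y : Fin n → α}
    (hxy : Setoid.ker x = Setoid.ker y) (i : Fin n) (v : α) :
    ∃ w, Setoid.ker (update y i w) = Setoid.ker (update x i v) := by
  obtain ⟨w, hw⟩ := exists_eq_iff_eq_of_ker_eq hα hxy v
  refine ⟨w, Setoid.ext fun j k => ?_⟩
  simp only [Setoid.ker_def, update_apply]
  split_ifs
  · simp
  · rw [eq_comm, hw, eq_comm]
  · exact hw j
  · exact (Setoid.ext_iff.mp hxy j k).symm


theorem setCylStr_c_mem_kernelAlgebra (hα : n < Nat.card α) (i : Fin n)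
    {X : Set (ι × (Fin n → α))} (hX : X ∈ kernelAlgebra ι α n) :
    (setCylStr ι α (Fin n)).c i X ∈ kernelAlgebra ι α n := by
  have : Finite α := Nat.finite_of_card_ne_zero (by omega)
  set c := (setCylStr ι α (Fin n)).c i
  have hc : c X = ⋃ κ, c (X ∩ region κ) := by
    ext p
    simp [c, setCylStr, region]
  rw [hc]
  refine BooleanSubalgebra.iSup_mem fun κ => ?_
  rcases mem_kernelAlgebra.mp hX κ with hfin | hcof
  · exact mem_kernelAlgebra_of_finite (setCylStr_c_finite hfin)
  -- `c (X ∩ region κ)` differs from the union of regions `c (region κ)` by a finite set.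
  have hR : c (region κ) ∈ kernelAlgebra ι α n := by
    refine mem_kernelAlgebra_of_ker_eq fun p q hpq ⟨v, hv⟩ => ?_
    obtain ⟨w, hw⟩ := exists_ker_update_eq hα hpq i v
    exact ⟨w, hw.trans hv⟩
  have hE : (c (region κ \ X)).Finite := setCylStr_c_finite hcof
  have hsplit : c (region κ) = c (X ∩ region κ) ∪ c (region κ \ X) := by
    conv_lhs => rw [← Set.inter_union_sdiff (region κ) X, Set.inter_comm]
    exact (setCylStr ι α (Fin n)).c_sup i _ _
  have : c (X ∩ region κ) =
      (c (region κ) \ c (region κ \ X)) ∪ (c (X ∩ region κ) ∩ c (region κ \ X)) := by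
    rw [hsplit, Set.union_sdiff_right, Set.sdiff_union_inter]
  rw [this]
  exact BooleanSubalgebra.sup_mem (BooleanSubalgebra.sdiff_mem hR (mem_kernelAlgebra_of_finite hE))
    (mem_kernelAlgebra_of_finite (hE.subset Set.inter_subset_right))


theorem setCylStr_d_mem_kernelAlgebra (i j : Fin n) :
    (setCylStr ι α (Fin n)).d i j ∈ kernelAlgebra ι α n :=
  mem_kernelAlgebra_of_ker_eq fun _ _ hpq hp => Setoid.ker_def.mp (hpq ▸ Setoid.ker_def.mpr hp)

def kernelStr (hα : n < Nat.card α) : CylStruct (Fin n) (kernelAlgebra ι α n) :=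
  (setCylStr ι α (Fin n)).restrict _ (setCylStr_c_mem_kernelAlgebra hα)
    setCylStr_d_mem_kernelAlgebra

theorem representable_kernelStr (hn : 1 < n) (hα : n < Nat.card α) :
    Representable n (kernelStr (ι := ι) hα) := by
  have : Nonempty α := (Nat.card_pos_iff.mp (by omega)).1
  exact ⟨_, _, _, isGsUnit_range_squareEmbed, (isRepOn_setCylStr hn).restrict _ _ _⟩

def pointAtom (p : ι × (Fin n → α)) : kernelAlgebra ι α n :=
  ⟨{p}, mem_kernelAlgebra_of_finite (Set.finite_singleton p)⟩

theorem isAtom_pointAtom (p : ι × (Fin n → α)) : IsAtom (pointAtom p) :=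
  ⟨fun h => Set.singleton_ne_empty p (congrArg Subtype.val h),
    fun b hb => Subtype.ext ((Set.isAtom_singleton p).2 b.1 hb)⟩

theorem pointAtom_le_iff {p : ι × (Fin n → α)} {X : kernelAlgebra ι α n} :
    pointAtom p ≤ X ↔ p ∈ X.1 := Set.singleton_subset_iff

theorem exists_pointAtom_le {X : kernelAlgebra ι α n} (hX : X ≠ ⊥) : ∃ p, pointAtom p ≤ X := by
  obtain ⟨p, hp⟩ := Set.nonempty_iff_ne_empty.mpr fun h => hX (Subtype.ext h)
  exact ⟨p, pointAtom_le_iff.mpr hp⟩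

instance : IsAtomic (kernelAlgebra ι α n) :=
  ⟨fun _ => or_iff_not_imp_left.mpr fun hX =>
    let ⟨p, hp⟩ := exists_pointAtom_le hX
    ⟨_, isAtom_pointAtom p, hp⟩⟩

theorem IsAtom.exists_eq_pointAtom {a : kernelAlgebra ι α n} (ha : IsAtom a) :
    ∃ p, pointAtom p = a := by
  obtain ⟨p, hp⟩ := exists_pointAtom_le ha.1
  exact ⟨p, (ha.le_iff.mp hp).resolve_left (isAtom_pointAtom p).1⟩

end KernelAlgebra

section SlimUltrafilters

variable {P : Type} {L : BooleanSubalgebra (Set P)} {R : Set P}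

variable (L R) in
def cofiniteOn : Set L := {X | (R \ X.1).Finite}

def IsSlim (G : Set L) : Prop := ∀ X ∈ G, (X.1 : Set P).Infinite

theorem isBoolUltrafilter_cofiniteOn (hR : R.Infinite) (hL : L ≤ finCofinOn R) :
    IsBoolUltrafilter (cofiniteOn L R) := by
  refine ⟨by simp [cofiniteOn], by simpa [cofiniteOn] using hR, fun X hX Y hY => ?_,
    fun X hX Y hXY => hX.subset (Set.sdiff_subset_sdiff_right hXY), fun X => ?_⟩
  · exact (hX.union hY).subset fun p ⟨hpR, hpXY⟩ => by
      by_cases hpX : p ∈ X.1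
      exacts [Or.inr ⟨hpR, fun hpY => hpXY ⟨hpX, hpY⟩⟩, Or.inl ⟨hpR, hpX⟩]
  · rcases hL X.2 with h | h
    · exact Or.inr (by simpa [cofiniteOn, Set.inter_comm] using h)
    · exact Or.inl h

theorem isSlim_cofiniteOn (hR : R.Infinite) : IsSlim (cofiniteOn L R) := fun X hX hfin =>
  hR ((hX.union hfin).subset fun p hp => by by_cases hpX : p ∈ X.1 <;> simp [hp, hpX])

theorem IsSlim.eq {G H : Set L} (hL : L ≤ finCofinOn R) (hRL : R ∈ L)
    (hG : IsBoolUltrafilter G) (hH : IsBoolUltrafilter H) (hGs : IsSlim G) (hHs : IsSlim H)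
    (hRG : ⟨R, hRL⟩ ∈ G) (hRH : ⟨R, hRL⟩ ∈ H) : G = H := by
  refine hG.eq_of_subset hH fun X hX => ?_
  have hcof : (R \ X.1).Finite :=
    (hL X.2).resolve_left fun h => hGs _ (hG.inf_mem hX hRG) (by simpa using h)
  let E : L := ⟨R \ X.1, L.sdiff_mem hRL X.2⟩
  have : X ⊔ E ∈ H := hH.mem_of_le hRH fun p hp => by
    by_cases hpX : p ∈ X.1
    exacts [Or.inl hpX, Or.inr ⟨hp, hpX⟩]
  exact (hH.mem_or_mem this).resolve_right fun hE => hHs E hE hcof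

end SlimUltrafilters

section NoEmbedding

open Function

variable {ι α : Type} {n : ℕ}

def regionElem (κ : Setoid (Fin n)) : kernelAlgebra ι α n :=
  ⟨region κ, region_mem_kernelAlgebra κ⟩

theorem IsBoolUltrafilter.exists_regionElem_mem {G : Set (kernelAlgebra ι α n)}
    (hG : IsBoolUltrafilter G) : ∃ κ, regionElem κ ∈ G := by
  have := Fintype.ofFinite (Setoid (Fin n))
  refine (hG.exists_mem_of_finset_sup_mem Finset.univ (hG.mem_of_le hG.top_mem ?_)).imp
    fun κ h => h.2
  intro p _
  exact Finset.le_sup (f := regionElem) (Finset.mem_univ (Setoid.ker p.2)) rfl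

theorem isSlim_of_canRel (hα : n < Nat.card α) {i : Fin n}
    {F G : Set (kernelAlgebra ι α n)} (hF : IsSlim F) (h : CanRel (kernelStr hα) i F G) :
    IsSlim G := by
  have : Finite α := Nat.finite_of_card_ne_zero (by omega)
  exact fun X hX hfin => hF _ (h X hX) (setCylStr_c_finite hfin)

def atomAt (p : ι × (Fin n → α)) : {a : kernelAlgebra ι α n // IsAtom a} :=
  ⟨pointAtom p, isAtom_pointAtom p⟩

theorem atomAt_injective : Injective (atomAt : ι × (Fin n → α) → _) := fun _ _ h =>
  Set.singleton_injective (congrArg (·.1.1) h)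

def transversal (i : Fin n) (a : α) : Set {b : kernelAlgebra ι α n // IsAtom b} :=
  atomAt '' {p | p.2 i = a}

theorem cmC_transversal (hα : n < Nat.card α) (i : Fin n) (a : α) :
    cmC (kernelStr hα) i (transversal (ι := ι) i a) = Set.univ := by
  refine Set.eq_univ_of_forall fun b => ?_
  obtain ⟨p, hp⟩ := b.2.exists_eq_pointAtom
  refine ⟨atomAt (p.1, update p.2 i a), ⟨_, by simp, rfl⟩, ?_⟩
  rw [← hp, pointAtom_le_iff]
  exact ⟨a, rfl⟩

theorem disjoint_transversal (i : Fin n) {a b : α} (hab : a ≠ b) :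
    Disjoint (transversal (ι := ι) i a) (transversal i b) := by
  rw [Set.disjoint_left]
  rintro _ ⟨p, rfl, rfl⟩ ⟨q, hq, hpq⟩
  exact hab (atomAt_injective hpq ▸ hq)

theorem infinite_region [Infinite ι] (x : Fin n → α) :
    (region (Setoid.ker x) : Set (ι × (Fin n → α))).Infinite :=
  Set.infinite_of_injective_forall_mem (f := fun m : ι => (m, x))
    (fun _ _ h => (Prod.mk.inj h).1) fun _ => rfl

theorem not_isCylHom_cmStr_canStr [Infinite ι] (hα : n < Nat.card α)
    (hK : Nat.card (Setoid (Fin n)) < Nat.card α) (i : Fin n)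
    (f : Set {a : kernelAlgebra ι α n // IsAtom a} →
      Set {F : Set (kernelAlgebra ι α n) // IsBoolUltrafilter F}) :
    ¬ IsCylHom (cmStr (kernelStr hα)) (canStr (kernelStr hα)) f := by
  intro hf
  have : Nonempty α := (Nat.card_pos_iff.mp (by omega)).1
  set R : Set (ι × (Fin n → α)) := region (Setoid.ker fun _ => Classical.arbitrary α)
  have hRinf : R.Infinite := infinite_region (ι := ι) _
  have hRfin : kernelAlgebra ι α n ≤ finCofinOn R := iInf_le _ _
  let z : {F // IsBoolUltrafilter F} := ⟨_, isBoolUltrafilter_cofiniteOn hRinf hRfin⟩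
  have hslim : ∀ a, ∃ G : {F // IsBoolUltrafilter F}, G ∈ f (transversal i a) ∧ IsSlim G.1 := by
    intro a
    have hz : z ∈ (canStr (kernelStr hα)).c i (f (transversal i a)) := by
      rw [← hf.map_c i, show (cmStr (kernelStr hα)).c i _ = ⊤ from cmC_transversal hα i a,
        hf.bool.map_top]
      trivial
    obtain ⟨G, hGT, hzG⟩ := hz
    exact ⟨G, hGT, isSlim_of_canRel hα (isSlim_cofiniteOn hRinf) hzG⟩
  choose G hGT hGslim using hslim
  choose κ hκ using fun a => (G a).2.exists_regionElem_mem
  have hinj : Injective κ := by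
    intro a b hab
    by_contra hne
    have hGab : G a = G b := Subtype.ext <| IsSlim.eq (iInf_le _ (κ a)) _ (G a).2 (G b).2
      (hGslim a) (hGslim b) (hκ a) (hab ▸ hκ b)
    have hdisj : f (transversal i a) ⊓ f (transversal i b) = ⊥ := by
      rw [← hf.bool.map_inf, (disjoint_transversal i hne).eq_bot, hf.bool.map_bot]
    exact (hdisj ▸ ⟨hGT a, hGab ▸ hGT b⟩ : G a ∈ (⊥ : Set _))
  exact (Nat.card_le_card_of_injective κ hinj).not_gt hK

end NoEmbedding

/-- Let `2 < n < ω`.  There exists an atomic `A ∈ RCA_n` such that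
there is no injective `CA_n`-homomorphism from the complex algebra `Cm At A` (the
Dedekind–MacNeille completion of the subalgebra generated by the atoms) into the
canonical extension `A⁺` of `A`. -/
theorem complex_algebra_not_embeddable_in_canonical_extension (n : ℕ) (hn : 2 < n) :
    ∃ A : CAlg (Fin n),
      IsAtomic A.carrier ∧ Representable n A.str ∧
      ∃ cCm : CylStruct (Fin n) (Set {a : A.carrier // IsAtom a}),
        IsComplexAlgebraOf A.str cCm ∧
        ∃ cP : CylStruct (Fin n) (Set {F : Set A.carrier // IsBoolUltrafilter F}),
          IsCanonicalExtOf A.str cP ∧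
          ¬ ∃ f : Set {a : A.carrier // IsAtom a} →
              Set {F : Set A.carrier // IsBoolUltrafilter F},
              IsCylHom cCm cP f ∧ Function.Injective f := by
  have hα : n < Nat.card (Fin (n + Nat.card (Setoid (Fin n)) + 1)) := by simp
  have hK : Nat.card (Setoid (Fin n)) < Nat.card (Fin (n + Nat.card (Setoid (Fin n)) + 1)) := by
    simp
  exact ⟨⟨kernelAlgebra ℕ _ n, kernelStr hα⟩, inferInstance, representable_kernelStr (by omega) hα,
    cmStr _, ⟨fun _ _ => rfl, fun _ _ => rfl⟩, canStr _, ⟨fun _ _ => rfl, fun _ _ => rfl⟩,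
    fun ⟨f, hf, _⟩ => not_isCylHom_cmStr_canStr hα hK ⟨0, by omega⟩ f hf⟩
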